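/- arXiv:2503.04923 — 2 statements merged into one kernel-verified Lean document; each statement's English description precedes it below -/
import Mathlib

section
/- Suppose v : ℤ → ℂ^k represents a point of the skew shaped positroid S°_{λ/μ} and let 1 ≤ a ≤ n−k with μ̄_a < λ̄_a. Then the intersection V(a, μ̄_a+1) ∩ span(v_{a+μ̄_a+1},…,v_{a+λ̄_a}) is one-dimensional and spanned by v_{a+μ̄_a}; in particular v_{a+μ̄_a} ≠ 0. -/
/-- The height `λ̄_a` of the `a`-th column (counted from the right) of the
partition `f = (f 1 ≥ ⋯ ≥ f k)` inside the `k × (n-k)` rectangle. -/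
def colHeight (n k : ℕ) (f : ℕ → ℕ) (a : ℕ) : ℕ :=
  ((Finset.Icc 1 k).filter (fun i => n - k - a + 1 ≤ f i)).card

/-- `b_i = n - k - μ_i + i`. -/
def bvec (n k : ℕ) (m : ℕ → ℕ) (i : ℕ) : ℕ := n - k - m i + i

/-- The short label `J(a,i) = {min (a+j-1) (b_j) : j = 1, …, i}`. -/
def shortLabel (n k : ℕ) (m : ℕ → ℕ) (a i : ℕ) : Finset ℕ :=
  (Finset.Icc 1 i).image (fun j => min (a + j - 1) (bvec n k m j))

/-- The label `I'(a,i) = J(a,i) ∪ {b_{i+1}, …, b_k}`. -/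
def fullLabel (n k : ℕ) (m : ℕ → ℕ) (a i : ℕ) : Finset ℕ :=
  shortLabel n k m a i ∪ (Finset.Icc (i + 1) k).image (bvec n k m)

/-- `I_μ = {b_1, …, b_k}`. -/
def Imu (n k : ℕ) (m : ℕ → ℕ) : Finset ℕ := (Finset.Icc 1 k).image (bvec n k m)

/-- The box `(a,i)` belongs to the skew diagram `λ/μ`. -/
def InSkew (n k : ℕ) (l m : ℕ → ℕ) (a i : ℕ) : Prop :=
  1 ≤ a ∧ a ≤ n - k ∧ 1 ≤ i ∧ i ≤ k ∧ colHeight n k m a < i ∧ i ≤ colHeight n k l a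

/-- The box `(a,i)` belongs to the boundary ribbon `R(λ/μ)`. -/
def InRibbon (n k : ℕ) (l m : ℕ → ℕ) (a i : ℕ) : Prop :=
  InSkew n k l m a i ∧ (a = 1 ∨ colHeight n k l (a - 1) ≤ i)

/-- `S` is the `r`-th entry of the Grassmann necklace `I_{λ/μ}`. -/
def IsNecklaceEntry (n k : ℕ) (l m : ℕ → ℕ) (r : ℕ) (S : Finset ℕ) : Prop :=
  (∃ a i, InRibbon n k l m a i ∧ r = a + i - 1 ∧ S = fullLabel n k m a i) ∨
  ((¬ ∃ a i, InRibbon n k l m a i ∧ r = a + i - 1) ∧ S = Imu n k m)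

/-- The family `{v_j : j ∈ S}` is a basis of `ℂ^k`. -/
def IsBasisFam (k : ℕ) (v : ℤ → Fin k → ℂ) (S : Finset ℕ) : Prop :=
  LinearIndependent ℂ (fun j : ↥S => v ((j : ℕ) : ℤ)) ∧
  Submodule.span ℂ ((fun j : ℕ => v (j : ℤ)) '' (S : Set ℕ)) = ⊤

/-- `v : ℤ → ℂ^k` represents a point of the skew shaped positroid `S°_{λ/μ}`. -/
def RepsPoint (n k : ℕ) (l m : ℕ → ℕ) (v : ℤ → Fin k → ℂ) : Prop :=
  (∀ j : ℤ, v (j + (n : ℤ)) = ((-1 : ℂ) ^ (k - 1)) • v j) ∧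
  (∀ r ∈ Finset.Icc 1 n, ∀ S : Finset ℕ, IsNecklaceEntry n k l m r S → IsBasisFam k v S) ∧
  (∀ a : ℕ, 1 ≤ a → a ≤ n - k →
    v ((a + colHeight n k m a : ℕ) : ℤ) ∈
      Submodule.span ℂ ((fun j : ℕ => v (j : ℤ)) ''
        ↑(Finset.Icc (a + colHeight n k m a + 1) (a + colHeight n k l a))))

/-- `V(a,i) = span{v_j : j ∈ J(a,i)}`. -/
noncomputable def Vspace (n k : ℕ) (m : ℕ → ℕ) (v : ℤ → Fin k → ℂ) (a i : ℕ) :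
    Submodule ℂ (Fin k → ℂ) :=
  Submodule.span ℂ ((fun j : ℕ => v (j : ℤ)) '' ↑(shortLabel n k m a i))

/-- `W^op_p = span(v_{b_1}, …, v_{b_p})`. -/
noncomputable def Wop (n k : ℕ) (m : ℕ → ℕ) (v : ℤ → Fin k → ℂ) (p : ℕ) :
    Submodule ℂ (Fin k → ℂ) :=
  Submodule.span ℂ ((fun j : ℕ => v (j : ℤ)) '' ↑((Finset.Icc 1 p).image (bvec n k m)))

/-- `W_p = span(v_{b_{k-p+1}}, …, v_{b_k})`. -/
noncomputable def Wsp (n k : ℕ) (m : ℕ → ℕ) (v : ℤ → Fin k → ℂ) (p : ℕ) :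
    Submodule ℂ (Fin k → ℂ) :=
  Submodule.span ℂ ((fun j : ℕ => v (j : ℤ)) '' ↑((Finset.Icc (k - p + 1) k).image (bvec n k m)))

lemma colHeight_le (n k : ℕ) (f : ℕ → ℕ) (a : ℕ) : colHeight n k f a ≤ k := by
  classical
  have h1 : ((Finset.Icc 1 k).filter (fun i => n - k - a + 1 ≤ f i)).card ≤ (Finset.Icc 1 k).card :=
    Finset.card_filter_le _ _
  have h2 : (Finset.Icc 1 k).card = k := by rw [Nat.card_Icc]; omega
  unfold colHeight; omega

lemma le_colHeight_iff (n k : ℕ) (f : ℕ → ℕ)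
    (hmono : ∀ i j, 1 ≤ i → i ≤ j → j ≤ k → f j ≤ f i)
    (a j : ℕ) (hj1 : 1 ≤ j) (hjk : j ≤ k) :
    j ≤ colHeight n k f a ↔ n - k - a + 1 ≤ f j := by
  classical
  constructor
  · intro h
    by_contra hc
    have hsub : (Finset.Icc 1 k).filter (fun i => n - k - a + 1 ≤ f i) ⊆ Finset.Icc 1 (j-1) := by
      intro i hi
      simp only [Finset.mem_filter, Finset.mem_Icc] at hi ⊢
      refine ⟨hi.1.1, ?_⟩
      by_contra hij
      have : f i ≤ f j := hmono j i hj1 (by omega) hi.1.2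
      omega
    have h2 := Finset.card_le_card hsub
    rw [Nat.card_Icc] at h2
    unfold colHeight at h
    omega
  · intro h
    have hsub : Finset.Icc 1 j ⊆ (Finset.Icc 1 k).filter (fun i => n - k - a + 1 ≤ f i) := by
      intro i hi
      simp only [Finset.mem_filter, Finset.mem_Icc] at hi ⊢
      exact ⟨⟨hi.1, le_trans hi.2 hjk⟩, le_trans h (hmono i j hi.1 hi.2 hjk)⟩
    have h2 := Finset.card_le_card hsub
    rw [Nat.card_Icc] at h2
    unfold colHeight
    omega

lemma colHeight_mono (n k : ℕ) (f : ℕ → ℕ) {a a' : ℕ} (h : a' ≤ a) :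
    colHeight n k f a' ≤ colHeight n k f a := by
  classical
  apply Finset.card_le_card
  intro x hx
  simp only [Finset.mem_filter] at hx ⊢
  exact ⟨hx.1, by omega⟩

lemma indep_of_subset {k : ℕ} {v : ℤ → Fin k → ℂ} {S : Finset ℕ}
    (hS : IsBasisFam k v S) {T : Set ℕ} (hT : T ⊆ ↑S) :
    LinearIndependent ℂ (fun j : T => v ((j : ℕ) : ℤ)) := by
  exact hS.1.comp (fun x : T => (⟨(x : ℕ), Finset.mem_coe.mp (hT x.2)⟩ : {y // y ∈ S}))
    (fun x y hxy => Subtype.ext (by simpa using congrArg Subtype.val hxy))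

lemma disjoint_spans {k : ℕ} {v : ℤ → Fin k → ℂ} {A C : Set ℕ}
    (hind : LinearIndependent ℂ (fun j : (A ∪ C : Set ℕ) => v ((j : ℕ) : ℤ)))
    (hdisj : Disjoint A C) :
    Disjoint (Submodule.span ℂ ((fun j : ℕ => v (j : ℤ)) '' A))
             (Submodule.span ℂ ((fun j : ℕ => v (j : ℤ)) '' C)) := by
  have h := hind.disjoint_span_image (s := Subtype.val ⁻¹' A) (t := Subtype.val ⁻¹' C)
    (hdisj.preimage _)
  have key : ∀ D : Set ℕ, D ⊆ A ∪ C →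
      (fun j : (A ∪ C : Set ℕ) => v ((j : ℕ) : ℤ)) '' (Subtype.val ⁻¹' D)
        = (fun j : ℕ => v (j : ℤ)) '' D := by
    intro D hD
    rw [show (fun j : (A ∪ C : Set ℕ) => v ((j : ℕ) : ℤ))
        = (fun j : ℕ => v (j : ℤ)) ∘ Subtype.val from rfl,
      Set.image_comp, Set.image_preimage_eq_inter_range, Subtype.range_val,
      Set.inter_eq_self_of_subset_left hD]
  rwa [key A Set.subset_union_left, key C Set.subset_union_right] at h
theorem stmt15 (n k : ℕ) (l m : ℕ → ℕ)
    (hk : 0 < k) (hkn : k < n)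
    (hlmono : ∀ i j, 1 ≤ i → i ≤ j → j ≤ k → l j ≤ l i)
    (hl1 : l 1 ≤ n - k)
    (hmmono : ∀ i j, 1 ≤ i → i ≤ j → j ≤ k → m j ≤ m i)
    (hml : ∀ i, 1 ≤ i → i ≤ k → m i ≤ l i)
    (v : ℤ → Fin k → ℂ) (hv : RepsPoint n k l m v)
    (a : ℕ) (ha1 : 1 ≤ a) (ha2 : a ≤ n - k)
    (hlt : colHeight n k m a < colHeight n k l a) :
    Module.finrank ℂ
      ↥(Vspace n k m v a (colHeight n k m a + 1) ⊓
        Submodule.span ℂ ((fun j : ℕ => v (j : ℤ)) ''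
          ↑(Finset.Icc (a + colHeight n k m a + 1) (a + colHeight n k l a)))) = 1 ∧
    Vspace n k m v a (colHeight n k m a + 1) ⊓
      Submodule.span ℂ ((fun j : ℕ => v (j : ℤ)) ''
        ↑(Finset.Icc (a + colHeight n k m a + 1) (a + colHeight n k l a))) =
      Submodule.span ℂ {v ((a + colHeight n k m a : ℕ) : ℤ)} ∧
    v ((a + colHeight n k m a : ℕ) : ℤ) ≠ 0 := by
  classical
  set ua := colHeight n k m a with hua
  set la := colHeight n k l a with hla
  have hu_k : ua ≤ k := colHeight_le n k m a
  have hl_k : la ≤ k := colHeight_le n k l a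
  have hmk : ∀ j, 1 ≤ j → j ≤ k → m j ≤ n - k := fun j h1 h2 =>
    le_trans (hmmono 1 j le_rfl h1 h2) (le_trans (hml 1 le_rfl hk) hl1)
  -- b_j ≤ a + j − 1 for 1 ≤ j ≤ ua
  have hble : ∀ j, 1 ≤ j → j ≤ ua → bvec n k m j + 1 ≤ a + j := by
    intro j h1 h2
    have h3 : n - k - a + 1 ≤ m j :=
      (le_colHeight_iff n k m hmmono a j h1 (le_trans h2 hu_k)).mp h2
    unfold bvec
    omega
  -- a + j ≤ b_j for ua < j ≤ k
  have hbge : ∀ j, ua < j → j ≤ k → a + j ≤ bvec n k m j := by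
    intro j h1 h2
    have hj : ¬ (n - k - a + 1 ≤ m j) := by
      intro hc
      exact absurd ((le_colHeight_iff n k m hmmono a j (by omega) h2).mpr hc) (by omega)
    have hmj : m j ≤ n - k := hmk j (by omega) h2
    unfold bvec
    omega
  -- a big basis containing {b_1,…,b_{ua}} ∪ {a+ua+1,…,a+la}
  obtain ⟨S, hSbasis, hsubS⟩ :
      ∃ S : Finset ℕ, IsBasisFam k v S ∧
        ((Finset.Icc 1 ua).image (bvec n k m) ∪ Finset.Icc (a + ua + 1) (a + la)) ⊆ S := by
    by_cases hcase : a + 1 ≤ n - k ∧ colHeight n k m (a + 1) < la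
    · refine ⟨fullLabel n k m (a + 1) la,
        hv.2.1 (a + la) (by simp only [Finset.mem_Icc]; omega) _
          (Or.inl ⟨a + 1, la, ⟨⟨by omega, hcase.1, by omega, hl_k, hcase.2,
            hla ▸ colHeight_mono n k l (by omega)⟩,
            Or.inr (by simpa using le_of_eq hla.symm)⟩, by omega, rfl⟩), ?_⟩
      intro x hx
      rcases Finset.mem_union.mp hx with hx | hx
      · obtain ⟨j, hj, rfl⟩ := Finset.mem_image.mp hx
        rw [Finset.mem_Icc] at hj
        apply Finset.mem_union_left
        apply Finset.mem_image.mpr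
        refine ⟨j, Finset.mem_Icc.mpr ⟨hj.1, by omega⟩, ?_⟩
        have := hble j hj.1 hj.2
        omega
      · rw [Finset.mem_Icc] at hx
        apply Finset.mem_union_left
        apply Finset.mem_image.mpr
        refine ⟨x - a, Finset.mem_Icc.mpr ⟨by omega, by omega⟩, ?_⟩
        have := hbge (x - a) (by omega) (by omega)
        omega
    · refine ⟨Imu n k m,
        hv.2.1 n (by simp only [Finset.mem_Icc]; omega) _ (Or.inr ⟨?_, rfl⟩), ?_⟩
      · rintro ⟨a', i', ⟨⟨h1, h2, h3, h4, _, _⟩, _⟩, hr⟩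
        omega
      · intro x hx
        rcases Finset.mem_union.mp hx with hx | hx
        · obtain ⟨j, hj, rfl⟩ := Finset.mem_image.mp hx
          rw [Finset.mem_Icc] at hj
          exact Finset.mem_image.mpr ⟨j, Finset.mem_Icc.mpr ⟨hj.1, by omega⟩, rfl⟩
        · rw [Finset.mem_Icc] at hx
          refine Finset.mem_image.mpr ⟨x - a, Finset.mem_Icc.mpr ⟨by omega, by omega⟩, ?_⟩
          have hj1 : ua < x - a := by omega
          have hj2 : x - a ≤ k := by omega
          have hle : ¬ (n - k - a + 1 ≤ m (x - a)) := by
            intro hc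
            exact absurd ((le_colHeight_iff n k m hmmono a (x - a) (by omega) hj2).mpr hc)
              (by omega)
          have hmj : m (x - a) ≤ n - k := hmk (x - a) (by omega) hj2
          rcases Nat.lt_or_ge (n - k) (a + 1) with h | h
          · unfold bvec; omega
          · have hge : n - k - (a + 1) + 1 ≤ m (x - a) := by
              have hx2 : x - a ≤ colHeight n k m (a + 1) := by
                push_neg at hcase
                exact le_trans (by omega) (hcase h)
              exact (le_colHeight_iff n k m hmmono (a + 1) (x - a) (by omega) hj2).mp hx2
            unfold bvec; omega
  -- the basis containing a + ua, for nonvanishing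
  have hribbon : InRibbon n k l m a la :=
    ⟨⟨ha1, ha2, by omega, hl_k, hlt, le_rfl⟩,
      Or.inr (le_trans (colHeight_mono n k l (by omega)) (le_of_eq hla.symm))⟩
  have hS2 : IsBasisFam k v (fullLabel n k m a la) :=
    hv.2.1 (a + la - 1) (by simp only [Finset.mem_Icc]; omega) _
      (Or.inl ⟨a, la, hribbon, rfl, rfl⟩)
  have hmem2 : a + ua ∈ fullLabel n k m a la := by
    apply Finset.mem_union_left
    apply Finset.mem_image.mpr
    refine ⟨ua + 1, Finset.mem_Icc.mpr ⟨by omega, by omega⟩, ?_⟩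
    have := hbge (ua + 1) (by omega) (by omega)
    omega
  have hne : v ((a + ua : ℕ) : ℤ) ≠ 0 := hS2.1.ne_zero ⟨a + ua, hmem2⟩
  -- notation
  set u₀ : Fin k → ℂ := v ((a + ua : ℕ) : ℤ) with hu₀
  set A : Set ℕ := ↑((Finset.Icc 1 ua).image (bvec n k m)) with hA
  set C : Set ℕ := ↑(Finset.Icc (a + ua + 1) (a + la)) with hC
  set U : Submodule ℂ (Fin k → ℂ) := Submodule.span ℂ ((fun j : ℕ => v (j : ℤ)) '' A) with hU
  set W : Submodule ℂ (Fin k → ℂ) := Submodule.span ℂ ((fun j : ℕ => v (j : ℤ)) '' C) with hW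
  have hu₀W : u₀ ∈ W := hv.2.2 a ha1 ha2
  have hTsub : A ∪ C ⊆ ↑S := by
    rw [hA, hC, ← Finset.coe_union]
    exact Finset.coe_subset.mpr hsubS
  have hindep := indep_of_subset hSbasis hTsub
  have hdisjAC : Disjoint A C := by
    rw [Set.disjoint_left]
    intro x hx hx'
    rw [hA] at hx; rw [hC] at hx'
    obtain ⟨j, hj, rfl⟩ := Finset.mem_image.mp (Finset.mem_coe.mp hx)
    rw [Finset.mem_Icc] at hj
    have := hble j hj.1 hj.2
    have hx2 := Finset.mem_Icc.mp (Finset.mem_coe.mp hx')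
    omega
  have hUW : Disjoint U W := disjoint_spans hindep hdisjAC
  -- compute the short label
  have hshort : shortLabel n k m a (ua + 1)
      = insert (a + ua) ((Finset.Icc 1 ua).image (bvec n k m)) := by
    unfold shortLabel
    ext x
    simp only [Finset.mem_image, Finset.mem_insert, Finset.mem_Icc]
    constructor
    · rintro ⟨j, hj, rfl⟩
      rcases Nat.lt_or_ge j (ua + 1) with h | h
      · right
        refine ⟨j, ⟨hj.1, by omega⟩, ?_⟩
        have := hble j hj.1 (by omega)
        omega
      · left
        have hje : j = ua + 1 := by omega
        subst hje
        have := hbge (ua + 1) (by omega) (by omega)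
        omega
    · rintro (rfl | ⟨j, hj, rfl⟩)
      · refine ⟨ua + 1, ⟨by omega, le_rfl⟩, ?_⟩
        have := hbge (ua + 1) (by omega) (by omega)
        omega
      · refine ⟨j, ⟨hj.1, by omega⟩, ?_⟩
        have := hble j hj.1 hj.2
        omega
  have hV : Vspace n k m v a (ua + 1) = Submodule.span ℂ {u₀} ⊔ U := by
    unfold Vspace
    rw [hshort, Finset.coe_insert, Set.image_insert_eq, Submodule.span_insert]
  have hsingleW : Submodule.span ℂ {u₀} ≤ W :=
    Submodule.span_le.mpr (by simpa using hu₀W)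
  have hVW : Vspace n k m v a (ua + 1) ⊓ W = Submodule.span ℂ {u₀} := by
    apply le_antisymm
    · rw [hV]
      intro x hx
      rw [Submodule.mem_inf] at hx
      obtain ⟨hx1, hx2⟩ := hx
      rw [Submodule.mem_sup] at hx1
      obtain ⟨y, hy, z, hz, rfl⟩ := hx1
      have hyW : y ∈ W := hsingleW hy
      have hzW : z ∈ W := by
        have := W.sub_mem hx2 hyW
        simpa using this
      have hz0 : z = 0 := by
        have := hUW.le_bot ⟨hz, hzW⟩
        simpa using this
      simpa [hz0] using hy
    · refine le_inf ?_ hsingleW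
      rw [hV]
      exact le_trans le_sup_left le_rfl
  refine ⟨?_, hVW, hne⟩
  rw [hVW]
  exact finrank_span_singleton hne
end

section
/- Suppose v : ℤ → ℂ^k represents a point of the skew shaped positroid S°_{λ/μ} and fix 1 ≤ a ≤ n−k. Then the flag at the cut F^a is transversal to the opposite subspaces, i.e. F^a_i + W_{k−i} = ℂ^k for every i = 1,…,k (where W_0 := 0), if and only if for every i with μ̄_a < i ≤ λ̄_a the family {v_j : j ∈ I'(a,i)} is linearly independent (equivalently, a basis of ℂ^k). -/
/-- `d_i = n - k + 1 - λ_i`, the column (from the right) of the rightmost box in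
the `i`-th row of `λ`. -/
def dvec (n k : ℕ) (l : ℕ → ℕ) (i : ℕ) : ℕ := n - k + 1 - l i

/-- The flag at the cut `F^a`: `F^a_i = W^op_i` for `i ≤ μ̄_a`, `F^a_i = V(a,i)`
for `μ̄_a < i ≤ λ̄_a`, and `F^a_i = V(d_i, i)` for `λ̄_a < i ≤ k`. -/
noncomputable def flagCut (n k : ℕ) (l m : ℕ → ℕ) (v : ℤ → Fin k → ℂ) (a i : ℕ) :
    Submodule ℂ (Fin k → ℂ) :=
  if i ≤ colHeight n k m a then Wop n k m v i
  else if i ≤ colHeight n k l a then Vspace n k m v a i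
  else Vspace n k m v (dvec n k l i) i

lemma spanTopIffLI (k : ℕ) (v : ℤ → Fin k → ℂ) (S : Finset ℕ) (hcard : S.card = k) :
    Submodule.span ℂ ((fun j : ℕ => v (j : ℤ)) '' (S : Set ℕ)) = ⊤ ↔
    LinearIndependent ℂ (fun j : ↥S => v ((j : ℕ) : ℤ)) := by
  have hrange : Set.range (fun j : ↥S => v ((j : ℕ) : ℤ)) =
      (fun j : ℕ => v (j : ℤ)) '' (S : Set ℕ) := by
    ext y
    constructor
    · rintro ⟨⟨j, hj⟩, rfl⟩; exact ⟨j, hj, rfl⟩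
    · rintro ⟨j, hj, rfl⟩; exact ⟨⟨j, hj⟩, rfl⟩
  constructor
  · intro h
    apply linearIndependent_of_top_le_span_of_card_eq_finrank
    · rw [hrange, h]
    · rw [Fintype.card_coe, hcard, Module.finrank_fin_fun]
  · intro h
    have h2 := finrank_span_eq_card h
    rw [hrange] at h2
    exact Submodule.eq_top_of_finrank_eq
      (by rw [h2, Fintype.card_coe, hcard, Module.finrank_fin_fun])

theorem stmt19 (n k : ℕ) (l m : ℕ → ℕ)
    (hk : 0 < k) (hkn : k < n)
    (hlmono : ∀ i j, 1 ≤ i → i ≤ j → j ≤ k → l j ≤ l i)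
    (hl1 : l 1 ≤ n - k)
    (hmmono : ∀ i j, 1 ≤ i → i ≤ j → j ≤ k → m j ≤ m i)
    (hml : ∀ i, 1 ≤ i → i ≤ k → m i ≤ l i)
    (v : ℤ → Fin k → ℂ) (hv : RepsPoint n k l m v)
    (a : ℕ) (ha1 : 1 ≤ a) (ha2 : a ≤ n - k) :
    (∀ i, 1 ≤ i → i ≤ k → flagCut n k l m v a i ⊔ Wsp n k m v (k - i) = ⊤) ↔
    (∀ i, colHeight n k m a < i → i ≤ colHeight n k l a →
      LinearIndependent ℂ (fun j : ↥(fullLabel n k m a i) => v ((j : ℕ) : ℤ))) := by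

  have hn1 : 1 ≤ n := by omega
  have hch_le : ∀ (g : ℕ → ℕ) (c : ℕ), colHeight n k g c ≤ k := by
    intro g c
    refine le_trans (Finset.card_filter_le _ _) ?_
    simp [Nat.card_Icc]
  have hm_le : ∀ j, 1 ≤ j → j ≤ k → m j ≤ n - k := by
    intro j h1 h2
    exact le_trans (le_trans (hmmono 1 j le_rfl h1 h2) (hml 1 le_rfl hk)) hl1
  have hb : ∀ j j', 1 ≤ j → j < j' → j' ≤ k → bvec n k m j < bvec n k m j' := by
    intro j j' h1 h2 h3
    have := hmmono j j' h1 (le_of_lt h2) h3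
    unfold bvec; omega
  have hcard : ∀ a' i, 1 ≤ a' → 1 ≤ i → i ≤ k → (fullLabel n k m a' i).card = k := by
    intro a' i ha' hi1 hik
    have hglt : ∀ j j', 1 ≤ j → j < j' → j' ≤ k →
        min (a' + j - 1) (bvec n k m j) < min (a' + j' - 1) (bvec n k m j') := by
      intro j j' h1 h2 h3
      have hbb := hb j j' h1 h2 h3
      have hA : a' + j - 1 < a' + j' - 1 := by omega
      exact lt_min ((min_le_left _ _).trans_lt hA) ((min_le_right _ _).trans_lt hbb)
    have hsc : (shortLabel n k m a' i).card = i := by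
      unfold shortLabel
      rw [Finset.card_image_of_injOn, Nat.card_Icc]
      · omega
      · intro x hx y hy hxy
        simp only [Finset.coe_Icc, Set.mem_Icc] at hx hy
        rcases lt_trichotomy x y with h | h | h
        · exact absurd hxy (ne_of_lt (hglt x y hx.1 h (hy.2.trans hik)))
        · exact h
        · exact absurd hxy.symm (ne_of_lt (hglt y x hy.1 h (hx.2.trans hik)))
    have htc : ((Finset.Icc (i + 1) k).image (bvec n k m)).card = k - i := by
      rw [Finset.card_image_of_injOn, Nat.card_Icc]
      · omega
      · intro x hx y hy hxy
        simp only [Finset.coe_Icc, Set.mem_Icc] at hx hy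
        rcases lt_trichotomy x y with h | h | h
        · exact absurd hxy (ne_of_lt (hb x y (by omega) h hy.2))
        · exact h
        · exact absurd hxy.symm (ne_of_lt (hb y x (by omega) h hx.2))
    have hdisj : Disjoint (shortLabel n k m a' i) ((Finset.Icc (i + 1) k).image (bvec n k m)) := by
      rw [Finset.disjoint_left]
      intro x hx hx'
      unfold shortLabel at hx
      simp only [Finset.mem_image, Finset.mem_Icc] at hx hx'
      obtain ⟨j, hj, rfl⟩ := hx
      obtain ⟨j', hj', he⟩ := hx'
      have hbb := hb j j' hj.1 (by omega) hj'.2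
      have := min_le_right (a' + j - 1) (bvec n k m j)
      omega
    unfold fullLabel
    rw [Finset.card_union_of_disjoint hdisj, hsc, htc]
    omega
  have hImuTop : Submodule.span ℂ ((fun j : ℕ => v (j : ℤ)) '' (Imu n k m : Set ℕ)) = ⊤ := by
    have hne : IsNecklaceEntry n k l m n (Imu n k m) := by
      right
      refine ⟨?_, rfl⟩
      rintro ⟨a', i', ⟨⟨h1, h2, h3, h4, _, _⟩, _⟩, hr⟩
      omega
    exact (hv.2.1 n (by simp [Finset.mem_Icc]; omega) _ hne).2
  have hWsp : ∀ i, i ≤ k → Wsp n k m v (k - i) =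
      Submodule.span ℂ ((fun j : ℕ => v (j : ℤ)) '' ((Finset.Icc (i + 1) k).image (bvec n k m) : Set ℕ)) := by
    intro i hik
    unfold Wsp
    have h1 : k - (k - i) + 1 = i + 1 := by omega
    rw [h1]
  have hsup : ∀ (S T : Finset ℕ),
      Submodule.span ℂ ((fun j : ℕ => v (j : ℤ)) '' (S : Set ℕ)) ⊔
        Submodule.span ℂ ((fun j : ℕ => v (j : ℤ)) '' (T : Set ℕ)) =
      Submodule.span ℂ ((fun j : ℕ => v (j : ℤ)) '' ((S ∪ T : Finset ℕ) : Set ℕ)) := by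
    intro S T
    rw [Finset.coe_union, Set.image_union, Submodule.span_union]
  have hWopTop : ∀ i, 1 ≤ i → i ≤ k → Wop n k m v i ⊔ Wsp n k m v (k - i) = ⊤ := by
    intro i h1 hik
    rw [hWsp i hik]
    unfold Wop
    rw [hsup, ← Finset.image_union]
    have hIcc : Finset.Icc 1 i ∪ Finset.Icc (i + 1) k = Finset.Icc 1 k := by
      ext x
      simp only [Finset.mem_union, Finset.mem_Icc]
      omega
    rw [hIcc]
    exact hImuTop
  constructor
  · intro H i hmi hli
    have h1 : 1 ≤ i := by omega
    have hik : i ≤ k := le_trans hli (hch_le l a)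
    have key := H i h1 hik
    rw [flagCut, if_neg (by omega), if_pos hli, hWsp i hik, Vspace, hsup] at key
    exact (spanTopIffLI k v _ (hcard a i ha1 h1 hik)).mp key
  · intro H i h1 hik
    rcases le_or_gt i (colHeight n k m a) with hcase | hcase
    · rw [flagCut, if_pos hcase]
      exact hWopTop i h1 hik
    · rcases le_or_gt i (colHeight n k l a) with hcase2 | hcase2
      · rw [flagCut, if_neg (by omega), if_pos hcase2, hWsp i hik, Vspace, hsup]
        exact (spanTopIffLI k v _ (hcard a i ha1 h1 hik)).mpr (H i hcase hcase2)
      · rw [flagCut, if_neg (by omega), if_neg (by omega)]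
        have hlik : l i ≤ n - k := le_trans (hlmono 1 i le_rfl h1 hik) hl1
        rcases lt_or_ge (m i) (l i) with hml2 | hml2
        · -- box (d_i, i) is on the boundary ribbon; use the necklace basis
          have hli1 : 1 ≤ l i := by omega
          have hd1 : 1 ≤ dvec n k l i := by unfold dvec; omega
          have hd2 : dvec n k l i ≤ n - k := by unfold dvec; omega
          have hdval : dvec n k l i = n - k + 1 - l i := rfl
          have hcm : colHeight n k m (dvec n k l i) < i := by
            have hsub : (Finset.Icc 1 k).filter (fun i' => n - k - dvec n k l i + 1 ≤ m i') ⊆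
                Finset.Icc 1 (i - 1) := by
              intro x hx
              simp only [Finset.mem_filter, Finset.mem_Icc] at hx ⊢
              have hv1 : n - k - dvec n k l i + 1 = l i := by omega
              refine ⟨hx.1.1, ?_⟩
              by_contra hc
              push_neg at hc
              have := hmmono i x h1 (by omega) hx.1.2
              omega
            have := Finset.card_le_card hsub
            rw [Nat.card_Icc] at this
            unfold colHeight
            omega
          have hcl : i ≤ colHeight n k l (dvec n k l i) := by
            have hsub : Finset.Icc 1 i ⊆
                (Finset.Icc 1 k).filter (fun i' => n - k - dvec n k l i + 1 ≤ l i') := by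
              intro x hx
              simp only [Finset.mem_Icc] at hx
              simp only [Finset.mem_filter, Finset.mem_Icc]
              have hv1 : n - k - dvec n k l i + 1 = l i := by omega
              exact ⟨⟨hx.1, le_trans hx.2 hik⟩, by
                rw [hv1]; exact hlmono x i hx.1 hx.2 hik⟩
            have := Finset.card_le_card hsub
            rw [Nat.card_Icc] at this
            unfold colHeight
            omega
          have hrib : InRibbon n k l m (dvec n k l i) i := by
            refine ⟨⟨hd1, hd2, h1, hik, hcm, hcl⟩, ?_⟩
            rcases eq_or_lt_of_le hd1 with hdd | hdd
            · exact Or.inl hdd.symm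
            · right
              have hsub : (Finset.Icc 1 k).filter
                  (fun i' => n - k - (dvec n k l i - 1) + 1 ≤ l i') ⊆ Finset.Icc 1 i := by
                intro x hx
                simp only [Finset.mem_filter, Finset.mem_Icc] at hx ⊢
                have hv1 : n - k - (dvec n k l i - 1) + 1 = l i + 1 := by omega
                refine ⟨hx.1.1, ?_⟩
                by_contra hc
                push_neg at hc
                have := hlmono i x h1 (by omega) hx.1.2
                omega
              have := Finset.card_le_card hsub
              rw [Nat.card_Icc] at this
              unfold colHeight
              omega
          have hne : IsNecklaceEntry n k l m (dvec n k l i + i - 1)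
              (fullLabel n k m (dvec n k l i) i) :=
            Or.inl ⟨dvec n k l i, i, hrib, rfl, rfl⟩
          have hbas := (hv.2.1 (dvec n k l i + i - 1)
            (by simp only [Finset.mem_Icc]; omega) _ hne).2
          rw [hWsp i hik, Vspace, hsup]
          exact hbas
        · -- λ_i ≤ μ_i : V(d_i, i) = W^op_i
          have hshort : shortLabel n k m (dvec n k l i) i =
              (Finset.Icc 1 i).image (bvec n k m) := by
            unfold shortLabel
            apply Finset.image_congr
            intro j hj
            simp only [Finset.coe_Icc, Set.mem_Icc] at hj
            have hmj : m j ≤ n - k := hm_le j hj.1 (le_trans hj.2 hik)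
            have hlm : l i ≤ m j := le_trans hml2 (hmmono j i hj.1 hj.2 hik)
            apply min_eq_right
            unfold bvec dvec
            omega
          have hVW : Vspace n k m v (dvec n k l i) i = Wop n k m v i := by
            unfold Vspace Wop
            rw [hshort]
          rw [hVW]
          exact hWopTop i h1 hik
end
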